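/- Let p ≥ 3 be an odd integer and q the multiplicative order of 2 modulo p. Let S be a complete prefix code such that q divides |u| for every u ∈ S, with lexicographic enumeration u₀ < u₁ < ⋯ < u_{n−1}. Then val_p(u_i) = (i : ZMod p) for every 0 ≤ i ≤ n−1; that is, the dyadic rationals of the leaves modulo p are 0, 1, 2, …, p−1, 0, 1, …, p−1, …, 0 from left to right. -/

import Mathlib

/-! Lexicographically consecutive leaves `uᵢ < uᵢ₊₁` of a prefix code have disjoint dyadic
intervals `[ρ(uᵢ), ρ(uᵢ) + 2^{-|uᵢ|})` lying in `[0, 1)` in this order; since their lengths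
add up to `1` they tile `[0, 1)`, so `ρ(uᵢ) = Σ_{j<i} 2^{-|uⱼ|}`. This is the vanishing at `1/2`
of an integer polynomial, so it persists at the inverse of `2` in `ZMod p`, where
`2^{-|uⱼ|} = 1` because `q ∣ |uⱼ|`. -/

/-- `val_p(a₁ ⋯ aₙ) = Σ_{i=1}^n aᵢ · (2⁻¹)^i ∈ ZMod p`, the reduction of
`ρ(a₁ ⋯ aₙ)` modulo `p`, defined recursively on the binary word. -/
def valp (p : ℕ) : List Bool → ZMod p
  | [] => 0
  | a :: t => ((if a then 1 else 0) + valp p t) * (2 : ZMod p)⁻¹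

open Polynomial Finset

theorem eq_sum_range_of_packing {α : Type*} [AddCommGroup α] [LinearOrder α]
    [IsOrderedAddMonoid α] {n : ℕ} {x ℓ : ℕ → α} {c : α} (h0 : 0 ≤ x 0)
    (hstep : ∀ i, i + 1 < n → x i + ℓ i ≤ x (i + 1)) (htop : ∀ i < n, x i + ℓ i ≤ c)
    (hsum : ∑ j ∈ range n, ℓ j = c) : ∀ i < n, x i = ∑ j ∈ range i, ℓ j := by
  have hgap : ∀ i k, i ≤ k → k < n → x i + ∑ j ∈ Ico i k, ℓ j ≤ x k := by
    intro i k hik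
    induction k, hik using Nat.le_induction with
    | base => simp
    | succ k hik ih =>
        intro hk
        rw [sum_Ico_succ_top hik, ← add_assoc]
        exact (add_le_add (ih (by omega)) le_rfl).trans (hstep k hk)
  intro i hi
  apply le_antisymm
  · have hlast : x i + ∑ j ∈ Ico i n, ℓ j ≤ c := by
      obtain ⟨m, rfl⟩ : ∃ m, n = m + 1 := ⟨n - 1, by omega⟩
      rw [sum_Ico_succ_top (by omega), ← add_assoc]
      exact (add_le_add (hgap i m (by omega) (by omega)) le_rfl).trans (htop m (by omega))
    rw [← hsum, ← sum_range_add_sum_Ico _ hi.le] at hlast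
    exact le_of_add_le_add_right hlast
  · have hfirst := hgap 0 i i.zero_le hi
    rw [← range_eq_Ico] at hfirst
    exact (le_add_of_nonneg_left h0).trans hfirst

theorem sum_range_getD_eq_sum_map {β M : Type*} [AddCommMonoid M] (L : List β) (d : β)
    (f : β → M) : ∑ j ∈ range L.length, f (L.getD j d) = (L.map f).sum := by
  rw [sum_range, ← Fin.sum_univ_fun_getElem]
  simp only [List.getD_eq_getElem _ _ (Fin.is_lt _)]

-- Clearing denominators: `aeval h P * 2 ^ P.natDegree` is the integer `(reflect _ P).eval 2`.
theorem aeval_eq_zero_iff_reflect_eval_two {R : Type*} [CommRing R] {h : R} (h2 : 2 * h = 1)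
    (P : ℤ[X]) : aeval h P = 0 ↔ (((reflect P.natDegree P).eval 2 : ℤ) : R) = 0 := by
  let _ : Invertible h := ⟨2, h2, by rw [mul_comm, h2]⟩
  rw [aeval_def, ← eval₂_reflect_eq_zero_iff _ h _ P le_rfl]
  change eval₂ _ (2 : R) _ = 0 ↔ _
  rw [eval₂_at_ofNat, eq_intCast]

theorem aeval_eq_zero_of_aeval_half_eq_zero {R : Type*} [CommRing R] {h : R} (h2 : 2 * h = 1)
    {P : ℤ[X]} (hP : aeval (2⁻¹ : ℚ) P = 0) : aeval h P = 0 := by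
  rw [aeval_eq_zero_iff_reflect_eval_two (by norm_num), Int.cast_eq_zero] at hP
  rw [aeval_eq_zero_iff_reflect_eval_two h2, hP, Int.cast_zero]

-- `wordPoly (a₁ ⋯ aₙ) = Σ aᵢ X ^ i`, so that `ρ` and `val_p` are both its values at `1/2`.
noncomputable def wordPoly : List Bool → ℤ[X]
  | [] => 0
  | a :: t => ((if a then 1 else 0) + wordPoly t) * X

theorem aeval_wordPoly_cons {R : Type*} [Ring R] (h : R) (a : Bool) (t : List Bool) :
    aeval h (wordPoly (a :: t)) = ((if a then 1 else 0) + aeval h (wordPoly t)) * h := by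
  cases a <;> simp [wordPoly]

theorem valp_eq_aeval_wordPoly (p : ℕ) (u : List Bool) :
    valp p u = aeval (2⁻¹ : ZMod p) (wordPoly u) := by
  induction u with
  | nil => simp [valp, wordPoly]
  | cons a t ih => rw [valp, aeval_wordPoly_cons, ih]

noncomputable def rho (u : List Bool) : ℚ := aeval (2⁻¹ : ℚ) (wordPoly u)

theorem rho_nil : rho [] = 0 := by simp [rho, wordPoly]

theorem rho_cons (a : Bool) (t : List Bool) :
    rho (a :: t) = ((if a then 1 else 0) + rho t) / 2 := by
  rw [rho, aeval_wordPoly_cons, div_eq_mul_inv, rho]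

theorem rho_nonneg : ∀ u : List Bool, 0 ≤ rho u
  | [] => rho_nil.ge
  | a :: t => by
      have := rho_nonneg t
      rw [rho_cons]
      cases a <;> norm_num <;> linarith

theorem rho_add_le_one : ∀ u : List Bool, rho u + 2⁻¹ ^ u.length ≤ 1
  | [] => by simp [rho_nil]
  | a :: t => by
      have := rho_add_le_one t
      rw [rho_cons, List.length_cons, pow_succ]
      cases a <;> norm_num <;> linarith

theorem rho_add_le_of_lex {u v : List Bool} (huv : List.Lex (· < ·) u v) (hpre : ¬ u <+: v) :
    rho u + 2⁻¹ ^ u.length ≤ rho v := by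
  induction huv with
  | nil => exact absurd List.nil_prefix hpre
  | @cons a u v _ ih =>
      have := ih fun h => hpre (List.cons_prefix_cons.mpr ⟨rfl, h⟩)
      rw [rho_cons, rho_cons, List.length_cons, pow_succ]
      cases a <;> norm_num <;> linarith
  | @rel a u b v hab =>
      obtain ⟨rfl, rfl⟩ := Bool.lt_iff.mp hab
      have := rho_add_le_one u
      have := rho_nonneg v
      rw [rho_cons, rho_cons, List.length_cons, pow_succ]
      norm_num
      linarith

theorem rho_getD_eq_sum {L : List (List Bool)} (hsorted : L.Pairwise (· < ·))
    (hprefixfree : ∀ u ∈ L, ∀ v ∈ L, u ≠ v → ¬ u <+: v)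
    (hsum : (L.map fun u => ((2 : ℚ)⁻¹) ^ u.length).sum = 1) : ∀ i < L.length,
    rho (L.getD i []) = ∑ j ∈ range i, (2⁻¹ : ℚ) ^ (L.getD j []).length := by
  refine eq_sum_range_of_packing (rho_nonneg _) (fun i hi => ?_) (fun i _ => rho_add_le_one _)
    ((sum_range_getD_eq_sum_map L [] _).trans hsum)
  have hlt : L[i] < L[i + 1] := List.pairwise_iff_getElem.mp hsorted i (i + 1) _ hi (by omega)
  rw [List.getD_eq_getElem _ _ hi, List.getD_eq_getElem _ _ (by omega)]
  exact rho_add_le_of_lex hlt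
    (hprefixfree _ (List.getElem_mem _) _ (List.getElem_mem _) hlt.ne)

theorem aeval_wordPoly_getD_eq_sum {L : List (List Bool)} (hsorted : L.Pairwise (· < ·))
    (hprefixfree : ∀ u ∈ L, ∀ v ∈ L, u ≠ v → ¬ u <+: v)
    (hsum : (L.map fun u => ((2 : ℚ)⁻¹) ^ u.length).sum = 1) {R : Type*} [CommRing R] {h : R}
    (h2 : 2 * h = 1) (i : ℕ) (hi : i < L.length) :
    aeval h (wordPoly (L.getD i [])) = ∑ j ∈ range i, h ^ (L.getD j []).length := by
  have hP : aeval h (wordPoly (L.getD i []) - ∑ j ∈ range i, X ^ (L.getD j []).length) = 0 := by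
    apply aeval_eq_zero_of_aeval_half_eq_zero h2
    rw [map_sub, map_sum, sub_eq_zero]
    simp only [map_pow, aeval_X]
    exact rho_getD_eq_sum hsorted hprefixfree hsum i hi
  simpa only [map_sub, map_sum, map_pow, aeval_X, sub_eq_zero] using hP

theorem valp_of_q_divisible_code_general (p : ℕ) (hodd : Odd p)
    (L : List (List Bool))
    (hsorted : L.Pairwise (· < ·))
    (hprefixfree : ∀ u ∈ L, ∀ v ∈ L, u ≠ v → ¬ u <+: v)
    (hsum : (L.map fun u => ((2 : ℚ)⁻¹) ^ u.length).sum = 1)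
    (hdvd : ∀ u ∈ L, orderOf (2 : ZMod p) ∣ u.length) :
    ∀ i : ℕ, i < L.length → valp p (L.getD i []) = (i : ZMod p) := by
  intro i hi
  have h2 : (2 : ZMod p) * 2⁻¹ = 1 := by
    exact_mod_cast ZMod.coe_mul_inv_eq_one 2 (Nat.coprime_two_left.mpr hodd)
  have hleaf : ∀ j ∈ range i, ((2 : ZMod p)⁻¹) ^ (L.getD j []).length = 1 := by
    intro j hj
    have hjL : j < L.length := (mem_range.mp hj).trans hi
    rw [List.getD_eq_getElem _ _ hjL]
    have h2pow := orderOf_dvd_iff_pow_eq_one.mp (hdvd _ (List.getElem_mem hjL))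
    simpa [h2pow] using pow_mul_pow_eq_one L[j].length h2
  rw [valp_eq_aeval_wordPoly, aeval_wordPoly_getD_eq_sum hsorted hprefixfree hsum h2 i hi,
    sum_congr rfl hleaf, sum_const, card_range, nsmul_one]

/-- Let `p ≥ 3` be odd and `q` the multiplicative order of `2` modulo `p`.  Let `S` be a
complete prefix code, presented as the list `L` of its elements in lexicographic order
(nonempty, sorted, prefix-free, `Σ 2^{−|u|} = 1`), with `q ∣ |u|` for every `u ∈ S`.
Then `val_p(u_i) = i` in `ZMod p` for every `0 ≤ i ≤ n−1`: the dyadic rationals of the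
leaves modulo `p` read `0, 1, 2, …, p−1, 0, 1, …, p−1, …, 0` from left to right. -/
theorem valp_of_q_divisible_code (p : ℕ) (hp3 : 3 ≤ p) (hodd : Odd p)
    (L : List (List Bool)) (hne : L ≠ [])
    (hsorted : L.Pairwise (· < ·))
    (hprefixfree : ∀ u ∈ L, ∀ v ∈ L, u ≠ v → ¬ u <+: v)
    (hsum : (L.map fun u => ((2 : ℚ)⁻¹) ^ u.length).sum = 1)
    (hdvd : ∀ u ∈ L, orderOf (2 : ZMod p) ∣ u.length) :
    ∀ i : ℕ, i < L.length → valp p (L.getD i []) = (i : ZMod p) :=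
  valp_of_q_divisible_code_general p hodd L hsorted hprefixfree hsum hdvd
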